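/- arXiv:1805.02861 — 4 statements merged into one kernel-verified Lean document; each statement's English description precedes it below -/
import Mathlib

section
/- Let p ∈ (0,1] and d ∈ ℕ with d ≥ 1. Among all tuples (P₁,…,P_d) ∈ [0,1]^d with fixed sum Q = Σᵢ Pᵢ, the product ∏ᵢ (1 − p·Pᵢ) is minimized by the extremal allocation that sets ⌊Q⌋ of the Pᵢ equal to 1, one equal to Q − ⌊Q⌋, and the rest to 0; i.e., for all such tuples, ∏ᵢ (1 − p·Pᵢ) ≥ (1−p)^⌊Q⌋ · (1 − p·(Q − ⌊Q⌋)). -/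
/-!
Write `g(Q) = (1 - p)^⌊Q⌋ (1 - p (Q - ⌊Q⌋))` for the value of the extremal allocation. Adding one more
coordinate `t ∈ [0, 1]` to a total `S` costs at most the factor `1 - p t`, i.e.
`g(S + t) ≤ (1 - p t) g(S)`: if the fractional part does not wrap around this is
`1 - p (f + t) ≤ (1 - p t)(1 - p f)`, and if it does the difference of the two sides is
`p² (1 - f)(1 - t) ≥ 0`. Induction on the number of coordinates finishes the proof.
-/

open Finset

noncomputable def extremalProduct (p Q : ℝ) : ℝ := (1 - p) ^ ⌊Q⌋₊ * (1 - p * (Q - ⌊Q⌋₊))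

lemma one_sub_mul_nonneg_of_le_one {p t : ℝ} (hp : p ≤ 1) (ht0 : 0 ≤ t) (ht1 : t ≤ 1) :
    0 ≤ 1 - p * t := by
  nlinarith

lemma extremalProduct_add_le {p S t : ℝ} (hp : p ≤ 1) (hS : 0 ≤ S) (ht0 : 0 ≤ t) (ht1 : t ≤ 1) :
    extremalProduct p (S + t) ≤ (1 - p * t) * extremalProduct p S := by
  set m := ⌊S⌋₊ with hm
  have hmS : (m : ℝ) ≤ S := Nat.floor_le hS
  have hSm : S < m + 1 := Nat.lt_floor_add_one S
  have hpow : 0 ≤ (1 - p) ^ m := pow_nonneg (by linarith) m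
  unfold extremalProduct
  rw [← hm]
  rcases lt_or_ge (S + t) (m + 1) with hno_carry | hcarry
  · have hfloor : ⌊S + t⌋₊ = m := by
      rw [Nat.floor_eq_iff (by linarith)]
      exact ⟨by linarith, hno_carry⟩
    have key : 1 - p * (S + t - m) ≤ (1 - p * t) * (1 - p * (S - m)) := by
      nlinarith [mul_nonneg (mul_self_nonneg p) (mul_nonneg ht0 (sub_nonneg.2 hmS))]
    rw [hfloor]
    calc (1 - p) ^ m * (1 - p * (S + t - m))
        ≤ (1 - p) ^ m * ((1 - p * t) * (1 - p * (S - m))) := mul_le_mul_of_nonneg_left key hpow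
      _ = (1 - p * t) * ((1 - p) ^ m * (1 - p * (S - m))) := by ring
  · have hfloor : ⌊S + t⌋₊ = m + 1 := by
      rw [Nat.floor_eq_iff (by linarith)]
      constructor <;> push_cast <;> linarith
    have key : (1 - p) * (1 - p * (S + t - (m + 1))) ≤ (1 - p * t) * (1 - p * (S - m)) := by
      nlinarith [mul_nonneg (mul_self_nonneg p)
        (mul_nonneg (by linarith : (0 : ℝ) ≤ m + 1 - S) (by linarith : (0 : ℝ) ≤ 1 - t))]
    rw [hfloor]
    push_cast
    calc (1 - p) ^ (m + 1) * (1 - p * (S + t - (m + 1)))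
        = (1 - p) ^ m * ((1 - p) * (1 - p * (S + t - (m + 1)))) := by ring
      _ ≤ (1 - p) ^ m * ((1 - p * t) * (1 - p * (S - m))) := mul_le_mul_of_nonneg_left key hpow
      _ = (1 - p * t) * ((1 - p) ^ m * (1 - p * (S - m))) := by ring

lemma extremalProduct_sum_le_prod {ι : Type*} {p : ℝ} (hp : p ≤ 1) (s : Finset ι) (P : ι → ℝ)
    (hP : ∀ i ∈ s, 0 ≤ P i ∧ P i ≤ 1) :
    extremalProduct p (∑ i ∈ s, P i) ≤ ∏ i ∈ s, (1 - p * P i) := by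
  classical
  induction s using Finset.induction_on with
  | empty => simp [extremalProduct]
  | insert j s hj ih =>
    have hPj := hP j (mem_insert_self j s)
    have hPs : ∀ i ∈ s, 0 ≤ P i ∧ P i ≤ 1 := fun i hi => hP i (mem_insert_of_mem hi)
    have hS : 0 ≤ ∑ i ∈ s, P i := sum_nonneg fun i hi => (hPs i hi).1
    rw [sum_insert hj, prod_insert hj, add_comm]
    calc extremalProduct p (∑ i ∈ s, P i + P j)
        ≤ (1 - p * P j) * extremalProduct p (∑ i ∈ s, P i) :=
          extremalProduct_add_le hp hS hPj.1 hPj.2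
      _ ≤ (1 - p * P j) * ∏ i ∈ s, (1 - p * P i) :=
          mul_le_mul_of_nonneg_left (ih hPs) (one_sub_mul_nonneg_of_le_one hp hPj.1 hPj.2)

theorem stmt_0_general (p : ℝ) (hp1 : p ≤ 1) (d : ℕ)
    (P : Fin d → ℝ) (hP : ∀ i, 0 ≤ P i ∧ P i ≤ 1) (Q : ℝ) (hQ : Q = ∑ i, P i) :
    (1 - p) ^ (⌊Q⌋₊) * (1 - p * (Q - ⌊Q⌋₊)) ≤ ∏ i, (1 - p * P i) := by
  subst hQ
  exact extremalProduct_sum_le_prod hp1 univ P fun i _ => hP i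

theorem stmt_0 (p : ℝ) (hp0 : 0 < p) (hp1 : p ≤ 1) (d : ℕ) (hd : 1 ≤ d)
    (P : Fin d → ℝ) (hP : ∀ i, 0 ≤ P i ∧ P i ≤ 1) (Q : ℝ) (hQ : Q = ∑ i, P i) :
    (1 - p) ^ (⌊Q⌋₊) * (1 - p * (Q - ⌊Q⌋₊)) ≤ ∏ i, (1 - p * P i) :=
  stmt_0_general p hp1 d P hP Q hQ
end

section
/- Consider three vertices v₁, v₂, v₃, each of attack length 2 and cost 1, with detection probability p = 1, patrolled by one patroller. The memoryless strategy that in each round selects uniformly at random one of the two vertices not visited in the previous round achieves level of protection exactly 1/2, which is strictly worse than the 5/9 achieved by the fully uniform strategy. -/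
theorem stmt_5 :
    let T : Fin 3 → Fin 3 → ℝ := fun v w => if w = v then 0 else 1 / 2
    -- probability that an attack (length 2) on vertex u, launched when the
    -- patroller currently sits at v, is missed in both of the next two rounds
    let miss : Fin 3 → Fin 3 → ℝ := fun v u =>
      ∑ w, (if w = u then 0 else T v w) * (∑ w', if w' = u then 0 else T w w')
    (1 - ⨆ v, ⨆ u, miss v u) = 1 / 2 ∧ (1 / 2 : ℝ) < 5 / 9 := by
  intro T miss
  have miss_eq : ∀ v u, miss v u = if u = v then 1 / 2 else 1 / 4 := by
    intro v u
    simp only [miss, T, Fin.sum_univ_three]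
    fin_cases v <;> fin_cases u <;> norm_num [Fin.ext_iff]
  have miss_le : ∀ v u, miss v u ≤ 1 / 2 := by
    intro v u
    rw [miss_eq]
    split_ifs <;> norm_num
  have sup_miss : ⨆ v, ⨆ u, miss v u = 1 / 2 := by
    refine le_antisymm (ciSup_le fun v => ciSup_le fun u => miss_le v u) ?_
    refine le_ciSup_of_le (Finite.bddAbove_range _) 0 (le_ciSup_of_le (Finite.bddAbove_range _) 0 ?_)
    rw [miss_eq, if_pos rfl]
  rw [sup_miss]
  norm_num
end

section
/- Let p ∈ (0,1], q ≤ D positive integers, k ≤ q. Consider the modular strategy on a basic set of q vertices that for the first ⌊D/q⌋·q steps rotates k tokens deterministically around the cycle and in the remaining D mod q steps chooses a k-subset uniformly at random. Then an attack of length D launched at step 0 on any vertex succeeds with probability exactly (1−p)^{k·⌊D/q⌋} · (1 − p·k/q)^{D mod q}. -/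
open Finset

private lemma aux_mod (q v n : ℕ) (hv : v < q) (hn : n ≤ q) :
    (v + q - n) % q = if n ≤ v then v - n else v + q - n := by
  split_ifs with h
  · have h2 : v + q - n = (v - n) + q := by omega
    rw [h2, Nat.add_mod_right, Nat.mod_eq_of_lt (by omega)]
  · exact Nat.mod_eq_of_lt (by omega)

private lemma aux_resid (q k : ℕ) (hq : 0 < q) (hk : k ≤ q) (v : ℕ) (hv : v < q) :
    ((Finset.range q).filter (fun r => ∃ n ∈ Finset.range k, (r + n) % q = v)).card = k := by
  classical
  have himg : ((Finset.range q).filter (fun r => ∃ n ∈ Finset.range k, (r + n) % q = v))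
      = (Finset.range k).image (fun n => (v + q - n) % q) := by
    ext r
    simp only [mem_filter, mem_range, mem_image]
    constructor
    · rintro ⟨hr, n, hn, hrn⟩
      refine ⟨n, hn, ?_⟩
      rcases le_or_gt q (r + n) with h | h
      · have hv2 : v = r + n - q := by
          rw [← hrn, Nat.mod_eq_sub_mod h, Nat.mod_eq_of_lt (by omega)]
        rw [show v + q - n = r by omega, Nat.mod_eq_of_lt hr]
      · have hv2 : v = r + n := by rw [← hrn, Nat.mod_eq_of_lt h]
        rw [show v + q - n = r + q by omega, Nat.add_mod_right, Nat.mod_eq_of_lt hr]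
    · rintro ⟨n, hn, rfl⟩
      refine ⟨Nat.mod_lt _ hq, n, hn, ?_⟩
      rw [Nat.mod_add_mod, show v + q - n + n = v + q by omega, Nat.add_mod_right,
        Nat.mod_eq_of_lt hv]
  rw [himg, Finset.card_image_of_injOn, Finset.card_range]
  intro a ha b hb hab
  simp only [Finset.coe_range, Set.mem_Iio] at ha hb
  have hab' : (v + q - a) % q = (v + q - b) % q := hab
  rw [aux_mod q v a hv (by omega), aux_mod q v b hv (by omega)] at hab'
  split_ifs at hab' <;> omega

private lemma aux_blocks (q k m : ℕ) (hq : 0 < q) (hk : k ≤ q) (v : ℕ) (hv : v < q) :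
    ((Finset.range (m * q)).filter (fun ℓ => ∃ n ∈ Finset.range k, (ℓ + n) % q = v)).card
      = m * k := by
  classical
  have hbij : ((Finset.range (m * q)).filter
        (fun ℓ => ∃ n ∈ Finset.range k, (ℓ + n) % q = v)).card
      = ((Finset.range m) ×ˢ ((Finset.range q).filter
          (fun r => ∃ n ∈ Finset.range k, (r + n) % q = v))).card := by
    apply Finset.card_nbij' (fun ℓ => (ℓ / q, ℓ % q)) (fun x => x.1 * q + x.2)
    · intro ℓ hℓ
      simp only [Finset.mem_coe, mem_filter, mem_range] at hℓ
      obtain ⟨hl, n, hn, h⟩ := hℓ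
      rw [Finset.mem_coe, Finset.mem_product]
      refine ⟨mem_range.2 (Nat.div_lt_of_lt_mul (by rwa [Nat.mul_comm] at hl)),
        mem_filter.2 ⟨mem_range.2 (Nat.mod_lt _ hq), n, mem_range.2 hn, ?_⟩⟩
      rwa [Nat.mod_add_mod]
    · rintro ⟨a, b⟩ hab
      rw [Finset.mem_coe, Finset.mem_product] at hab
      obtain ⟨ha, hb⟩ := hab
      rw [mem_range] at ha
      simp only [mem_filter, mem_range] at hb
      obtain ⟨hbq, n, hn, h⟩ := hb
      rw [Finset.mem_coe]
      refine mem_filter.2 ⟨mem_range.2 (by nlinarith), n, mem_range.2 hn, ?_⟩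
      rwa [Nat.add_assoc, Nat.add_comm, Nat.add_mul_mod_self_right]
    · intro ℓ _
      simp only
      rw [Nat.mul_comm, Nat.div_add_mod]
    · rintro ⟨a, b⟩ hab
      rw [Finset.mem_coe, Finset.mem_product] at hab
      obtain ⟨ha, hb⟩ := hab
      simp only [mem_filter, mem_range] at hb
      have h1 : (a * q + b) / q = a := by
        rw [Nat.add_comm, Nat.add_mul_div_right _ _ hq, Nat.div_eq_of_lt hb.1, Nat.zero_add]
      have h2 : (a * q + b) % q = b := by
        rw [Nat.add_comm, Nat.add_mul_mod_self_right, Nat.mod_eq_of_lt hb.1]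
      simp only [h1, h2]
  rw [hbij, Finset.card_product, Finset.card_range, aux_resid q k hq hk v hv]

private lemma aux_count_mem (q k : ℕ) (hq : 0 < q) (hk0 : 0 < k) (hk : k ≤ q) (v : Fin q) :
    (((Finset.powersetCard k (Finset.univ : Finset (Fin q))).filter
        (fun S => v ∈ S)).card) = (q - 1).choose (k - 1) := by
  classical
  have : ((Finset.powersetCard k (Finset.univ : Finset (Fin q))).filter
        (fun S => v ∈ S)).card
      = (Finset.powersetCard (k - 1) ((Finset.univ : Finset (Fin q)).erase v)).card := by
    apply Finset.card_nbij' (fun S => S.erase v) (fun T => insert v T)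
    · intro S hS
      simp only [Finset.mem_coe, mem_filter, Finset.mem_powersetCard_univ] at hS
      rw [Finset.mem_coe, Finset.mem_powersetCard]
      exact ⟨Finset.erase_subset_erase _ (Finset.subset_univ S),
        by rw [Finset.card_erase_of_mem hS.2, hS.1]⟩
    · intro T hT
      rw [Finset.mem_coe, Finset.mem_powersetCard] at hT
      have hvT : v ∉ T := fun h => (Finset.notMem_erase v _) (hT.1 h)
      simp only [Finset.mem_coe, mem_filter, Finset.mem_powersetCard_univ]
      refine ⟨?_, Finset.mem_insert_self _ _⟩
      rw [Finset.card_insert_of_notMem hvT, hT.2]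
      omega
    · intro S hS
      simp only [Finset.mem_coe, mem_filter] at hS
      exact Finset.insert_erase hS.2
    · intro T hT
      rw [Finset.mem_coe, Finset.mem_powersetCard] at hT
      have hvT : v ∉ T := fun h => (Finset.notMem_erase v _) (hT.1 h)
      exact Finset.erase_insert hvT
  rw [this, Finset.card_powersetCard, Finset.card_erase_of_mem (Finset.mem_univ v),
    Finset.card_univ, Fintype.card_fin]

theorem stmt_8 (p : ℝ) (hp0 : 0 < p) (hp1 : p ≤ 1) (q D k : ℕ) (hq : 0 < q)
    (hqD : q ≤ D) (hk0 : 0 < k) (hk : k ≤ q) (v : Fin q) :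
    (1 - p) ^ (((Finset.range (D / q * q)).filter
        (fun ℓ => ∃ n ∈ Finset.range k, (ℓ + n) % q = v.val)).card) *
      (∑ f : Fin (D % q) → {S : Finset (Fin q) // S.card = k},
        ((Fintype.card {S : Finset (Fin q) // S.card = k} : ℝ))⁻¹ ^ (D % q) *
          ∏ i, (if v ∈ (f i : Finset (Fin q)) then 1 - p else 1))
      = (1 - p) ^ (k * (D / q)) * (1 - p * k / q) ^ (D % q) := by
  classical
  set m := D % q with hm
  set c := Fintype.card {S : Finset (Fin q) // S.card = k} with hc
  have hcval : c = q.choose k := by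
    rw [hc, Fintype.card_finset_len, Fintype.card_fin]
  have hcpos : 0 < c := by rw [hcval]; exact Nat.choose_pos hk
  -- counting part
  rw [aux_blocks q k (D / q) hq hk v.val v.isLt, Nat.mul_comm]
  congr 1
  -- sum part
  have hsum : (∑ f : Fin m → {S : Finset (Fin q) // S.card = k},
      (c : ℝ)⁻¹ ^ m * ∏ i, (if v ∈ (f i : Finset (Fin q)) then 1 - p else 1))
      = (∑ S : {S : Finset (Fin q) // S.card = k},
          (c : ℝ)⁻¹ * (if v ∈ (S : Finset (Fin q)) then 1 - p else 1)) ^ m := by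
    have h1 : ∀ f : Fin m → {S : Finset (Fin q) // S.card = k},
        (c : ℝ)⁻¹ ^ m * ∏ i, (if v ∈ (f i : Finset (Fin q)) then 1 - p else 1)
        = ∏ i, ((c : ℝ)⁻¹ * (if v ∈ (f i : Finset (Fin q)) then 1 - p else 1)) := by
      intro f
      rw [Finset.prod_mul_distrib, Finset.prod_const, Finset.card_univ, Fintype.card_fin]
    simp_rw [h1]
    rw [← Fintype.piFinset_univ,
      Finset.sum_prod_piFinset (Finset.univ : Finset {S : Finset (Fin q) // S.card = k})
        (fun (_ : Fin m) (S : {S : Finset (Fin q) // S.card = k}) =>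
          (c : ℝ)⁻¹ * (if v ∈ (S : Finset (Fin q)) then 1 - p else 1)),
      Finset.prod_const, Finset.card_univ, Fintype.card_fin]
  rw [hsum]
  congr 1
  -- single-round average
  have hsub : (∑ S : {S : Finset (Fin q) // S.card = k},
      (c : ℝ)⁻¹ * (if v ∈ (S : Finset (Fin q)) then 1 - p else 1))
      = ∑ S ∈ Finset.powersetCard k (Finset.univ : Finset (Fin q)),
          (c : ℝ)⁻¹ * (if v ∈ S then 1 - p else 1) := by
    rw [Finset.sum_subtype (Finset.powersetCard k (Finset.univ : Finset (Fin q)))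
      (fun S => Finset.mem_powersetCard_univ)]
  rw [hsub, ← Finset.mul_sum, Finset.sum_ite, Finset.sum_const, Finset.sum_const]
  have hN1 := aux_count_mem q k hq hk0 hk v
  have hN2 : ((Finset.powersetCard k (Finset.univ : Finset (Fin q))).filter
        (fun S => v ∈ S)).card
      + ((Finset.powersetCard k (Finset.univ : Finset (Fin q))).filter
        (fun S => ¬ v ∈ S)).card = c := by
    rw [Finset.card_filter_add_card_filter_not, Finset.card_powersetCard,
      Finset.card_univ, Fintype.card_fin, hcval]
  set N1 := ((Finset.powersetCard k (Finset.univ : Finset (Fin q))).filter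
        (fun S => v ∈ S)).card with hN1def
  set N2 := ((Finset.powersetCard k (Finset.univ : Finset (Fin q))).filter
        (fun S => ¬ v ∈ S)).card with hN2def
  have hkey : q * N1 = c * k := by
    rw [hN1, hcval]
    have hid := Nat.add_one_mul_choose_eq (q - 1) (k - 1)
    have hq1 : q - 1 + 1 = q := by omega
    have hk1 : k - 1 + 1 = k := by omega
    rw [hq1, hk1] at hid
    exact hid
  -- real arithmetic
  have hqR : (q : ℝ) ≠ 0 := Nat.cast_ne_zero.2 (by omega)
  have hcR : (c : ℝ) ≠ 0 := Nat.cast_ne_zero.2 (by omega)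
  have hkeyR : (q : ℝ) * N1 = c * k := by exact_mod_cast hkey
  have hsumR : (N1 : ℝ) + N2 = c := by exact_mod_cast hN2
  rw [nsmul_eq_mul, nsmul_eq_mul, mul_one]
  field_simp
  nlinarith [hkeyR, hsumR, mul_pos hp0 (Nat.cast_pos.2 hcpos : (0:ℝ) < c)]
end

section
/- Let K ∈ ℕ₀, λ ∈ [0,1], p ∈ (0,1], q ≤ D positive integers. Suppose in each block the number of patrollers sent to a basic set of q vertices (of attack length D) is K+1 with probability λ and K with probability 1−λ, independently, and the patrollers follow the rotation-plus-uniform modular strategy. Then the probability that an attack of length D succeeds equals (1−p)^{K·⌊D/q⌋} · (1 − p·λ)^{⌊D/q⌋} · (1 − p·(K+λ)/q)^{D mod q}, provided the expected per-round visit probabilities multiply as stated. -/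
/-! Both factors are affine in the mixing weight `lam`: in a uniform round the visit probability
`K/q` or `(K+1)/q` averages to `(K+lam)/q`, and in a rotation sub-block the common factor
`(1-p)^K` splits off, leaving the extra visit's `1 - p * lam`. -/

theorem mix_pow_succ_eq_pow_mul {R : Type*} [CommRing R] (p l : R) (K : ℕ) :
    (1 - l) * (1 - p) ^ K + l * (1 - p) ^ (K + 1) = (1 - p) ^ K * (1 - p * l) := by
  ring

theorem mix_div_succ_eq_div {F : Type*} [Field F] (p l K q : F) :
    (1 - l) * (1 - p * K / q) + l * (1 - p * (K + 1) / q) = 1 - p * (K + l) / q := by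
  ring

theorem stmt_9_general (p lam : ℝ)
    (K : ℕ) (q D : ℕ) :
    -- per rotation sub-block: K sure visits plus one extra visit with prob lam;
    -- per uniform round: visited with prob K/q (prob 1-lam) or (K+1)/q (prob lam)
    ((1 - lam) * (1 - p) ^ K + lam * (1 - p) ^ (K + 1)) ^ (D / q) *
      ((1 - lam) * (1 - p * K / q) + lam * (1 - p * (K + 1) / q)) ^ (D % q)
      = (1 - p) ^ (K * (D / q)) * (1 - p * lam) ^ (D / q) *
        (1 - p * (K + lam) / q) ^ (D % q) := by
  rw [mix_pow_succ_eq_pow_mul, mix_div_succ_eq_div, mul_pow, ← pow_mul]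

theorem stmt_9 (p lam : ℝ) (hp0 : 0 < p) (hp1 : p ≤ 1) (hl0 : 0 ≤ lam) (hl1 : lam ≤ 1)
    (K : ℕ) (q D : ℕ) (hq : 0 < q) (hqD : q ≤ D) :
    -- per rotation sub-block: K sure visits plus one extra visit with prob lam;
    -- per uniform round: visited with prob K/q (prob 1-lam) or (K+1)/q (prob lam)
    ((1 - lam) * (1 - p) ^ K + lam * (1 - p) ^ (K + 1)) ^ (D / q) *
      ((1 - lam) * (1 - p * K / q) + lam * (1 - p * (K + 1) / q)) ^ (D % q)
      = (1 - p) ^ (K * (D / q)) * (1 - p * lam) ^ (D / q) *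
        (1 - p * (K + lam) / q) ^ (D % q) :=
  stmt_9_general p lam K q D
end
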